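/- Let L : ℝ → ℝ and d : ℝ → ℝ model the tank with control executed at every natural-number time: d is constant on each interval [n, n+1) for n : ℕ, with d(n) = 1 if L(n) ≤ 4, d(n) = -1 if L(n) ≥ 9, and otherwise d(n) = d of the previous interval (with |d| = 1 always), and L(t) = L(n) + d(n)·(t - n) for t ∈ [n, n+1]. If 4 ≤ L(0) ≤ 9, then for all t ≥ 0, 3 ≤ L(t) ≤ 10. -/
import Mathlib


theorem tank_time_triggered_safe (L d : ℝ → ℝ)
    (hdconst : ∀ n : ℕ, ∀ t : ℝ, (n : ℝ) ≤ t → t < (n : ℝ) + 1 → d t = d n)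
    (hdmag : ∀ t : ℝ, d t = 1 ∨ d t = -1)
    (hset1 : ∀ n : ℕ, L n ≤ 4 → d n = 1)
    (hset2 : ∀ n : ℕ, L n ≥ 9 → d n = -1)
    (hkeep : ∀ n : ℕ, 4 < L ((n : ℝ) + 1) → L ((n : ℝ) + 1) < 9 →
      d ((n : ℝ) + 1) = d n)
    (hflow : ∀ n : ℕ, ∀ t : ℝ, (n : ℝ) ≤ t → t ≤ (n : ℝ) + 1 →
      L t = L n + d n * (t - n))
    (hinit : 4 ≤ L 0 ∧ L 0 ≤ 9) :
    ∀ t : ℝ, 0 ≤ t → 3 ≤ L t ∧ L t ≤ 10 := by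
  have hstep : ∀ n : ℕ, L ((n : ℝ) + 1) = L n + d n := by
    intro n
    have := hflow n ((n : ℝ) + 1) (by linarith) (by linarith)
    rw [this]; ring
  have key : ∀ n : ℕ, 3 ≤ L n ∧ L n ≤ 10 := by
    intro n
    induction n with
    | zero => norm_num; exact ⟨by linarith [hinit.1], by linarith [hinit.2]⟩
    | succ n ih =>
      have h1 := hstep n
      have h2 : ((n + 1 : ℕ) : ℝ) = (n : ℝ) + 1 := by push_cast; ring
      rw [h2, h1]
      rcases le_or_gt (L n) 4 with h | h
      · have := hset1 n h
        constructor <;> linarith [ih.1]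
      · rcases le_or_gt 9 (L n) with h' | h'
        · have := hset2 n h'
          constructor <;> linarith [ih.2]
        · rcases hdmag n with hd | hd <;> constructor <;> linarith
  intro t ht
  set n : ℕ := ⌊t⌋.toNat with hn
  have hfl : (0 : ℤ) ≤ ⌊t⌋ := Int.le_floor.2 (by exact_mod_cast ht)
  have hcast : (n : ℝ) = (⌊t⌋ : ℝ) := by
    rw [hn]; exact_mod_cast Int.toNat_of_nonneg hfl
  have h1 : (n : ℝ) ≤ t := by rw [hcast]; exact Int.floor_le t
  have h2 : t ≤ (n : ℝ) + 1 := by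
    rw [hcast]; exact le_of_lt (Int.lt_floor_add_one t)
  have hft := hflow n t h1 h2
  have hkn := key n
  have hkn1 := key (n + 1)
  have h3 : ((n + 1 : ℕ) : ℝ) = (n : ℝ) + 1 := by push_cast; ring
  rw [h3] at hkn1
  rw [hstep n] at hkn1
  rcases hdmag n with hd | hd <;> rw [hft, hd] <;>
    constructor <;> nlinarith [hkn.1, hkn.2, hkn1.1, hkn1.2]
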